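/- Let R be a *-ring and let a ∈ R be both group invertible and Moore–Penrose invertible. Then a is an SEP element if and only if a⁺aa# · a(a#)*a⁺ = a⁺aa# · a⁺a² (i.e. a(a#)*a⁺ and a⁺a² are left (a⁺aa#)-equivalent). -/

import Mathlib

/-!
Cancelling the projections `a⁺a` and `a#a` turns the left `(a⁺aa#)`-equivalence into the single
identity `a(a#)*a⁺ = a`. This identity forces `a²a⁺ = a`, hence `a#a = aa⁺`; so the group inverse
satisfies the Penrose equations and, by uniqueness, equals `a⁺`. With `a` now EP, `a(a⁺)*a⁺ = a` gives
`(a⁺)*a⁺ = a⁺a`, and then `a* = a*(a⁺)*a⁺ = a⁺aa⁺ = a⁺`.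
-/

section

variable {R : Type*}

structure IsMoorePenroseInverse [Mul R] [Star R] (a x : R) : Prop where
  mul_inv_mul : a * x * a = a
  inv_mul_inv : x * a * x = x
  star_mul_inv : star (a * x) = a * x
  star_inv_mul : star (x * a) = x * a

structure IsGroupInverse [Mul R] (a x : R) : Prop where
  mul_inv_mul : a * x * a = a
  inv_mul_inv : x * a * x = x
  commute : Commute a x

def LeftEquiv [Mul R] (x b c : R) : Prop := x * b = x * c

variable [Semigroup R] {a x y : R}

namespace IsGroupInverse

theorem mul_self_mul_inv (hx : IsGroupInverse a x) : a * a * x = a := by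
  rw [mul_assoc, hx.commute.eq, ← mul_assoc, hx.mul_inv_mul]

theorem inv_mul_mul_self (hx : IsGroupInverse a x) : x * a * a = a := by
  rw [← hx.commute.eq, hx.mul_inv_mul]

theorem inv_mul_eq_of_mul_self_mul_eq (hx : IsGroupInverse a x) (h : a * a * y = a) :
    x * a = a * y := calc
  x * a = x * (a * a * y) := by rw [h]
  _ = x * a * a * y := by simp only [mul_assoc]
  _ = a * y := by rw [hx.inv_mul_mul_self]

end IsGroupInverse

variable [StarMul R]

namespace IsMoorePenroseInverse

theorem unique (hx : IsMoorePenroseInverse a x) (hy : IsMoorePenroseInverse a y) : x = y := by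
  have hx_eq : x = x * a * y := calc
    x = x * star (a * x) := by rw [hx.star_mul_inv, ← mul_assoc, hx.inv_mul_inv]
    _ = x * star (a * y * a * x) := by rw [hy.mul_inv_mul]
    _ = x * (star (a * x) * star (a * y)) := by simp only [star_mul, mul_assoc]
    _ = x * a * x * (a * y) := by rw [hx.star_mul_inv, hy.star_mul_inv]; simp only [mul_assoc]
    _ = x * a * y := by rw [hx.inv_mul_inv, mul_assoc]
  have hy_eq : y = x * a * y := calc
    y = star (y * a) * y := by rw [hy.star_inv_mul, hy.inv_mul_inv]
    _ = star (y * a * x * a) * y := by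
      rw [show y * a * x * a = y * (a * x * a) by simp only [mul_assoc], hx.mul_inv_mul]
    _ = star (x * a) * star (y * a) * y := by simp only [star_mul, mul_assoc]
    _ = x * a * (y * a * y) := by rw [hx.star_inv_mul, hy.star_inv_mul]; simp only [mul_assoc]
    _ = x * a * y := by rw [hy.inv_mul_inv]
  exact hx_eq.trans hy_eq.symm

theorem mul_self_mul_eq_of_mul_mul_eq (hx : IsMoorePenroseInverse a x) (h : a * y * x = a) :
    a * a * x = a := by
  calc a * a * x = a * y * x * a * x := by rw [h]
    _ = a * y * (x * a * x) := by simp only [mul_assoc]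
    _ = a := by rw [hx.inv_mul_inv, h]

theorem star_eq_of_mul_star_mul_eq (hx : IsMoorePenroseInverse a x) (hc : Commute a x)
    (h : a * star x * x = a) : star a = x := by
  have hxx : a * x * star x = star x := calc
    a * x * star x = star (x * star (a * x)) := by rw [star_mul, star_star]
    _ = star x := by rw [hx.star_mul_inv, ← mul_assoc, hx.inv_mul_inv]
  have hsq : star x * x = x * a := calc
    star x * x = a * x * star x * x := by rw [hxx]
    _ = x * (a * star x * x) := by rw [hc.eq]; simp only [mul_assoc]
    _ = x * a := by rw [h]
  calc star a = star (a * x * a) := by rw [hx.mul_inv_mul]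
    _ = star a * (x * a) := by rw [star_mul, hx.star_mul_inv, hc.eq]
    _ = star (x * a) * x := by rw [star_mul, ← hsq, mul_assoc]
    _ = x := by rw [hx.star_inv_mul, hx.inv_mul_inv]

end IsMoorePenroseInverse

namespace IsGroupInverse

theorem isMoorePenroseInverse_of_inv_mul_eq (hx : IsGroupInverse a x)
    (hy : IsMoorePenroseInverse a y) (h : x * a = a * y) : IsMoorePenroseInverse a x :=
  ⟨hx.mul_inv_mul, hx.inv_mul_inv, by rw [hx.commute.eq, h, hy.star_mul_inv],
    by rw [h, hy.star_mul_inv]⟩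

end IsGroupInverse

variable {ap ag : R}

theorem leftEquiv_iff_mul_star_mul_eq (hp : IsMoorePenroseInverse a ap)
    (hg : IsGroupInverse a ag) :
    LeftEquiv (ap * a * ag) (a * star ag * ap) (ap * a * a) ↔ a * star ag * ap = a := by
  have hL : ap * a * ag * (a * star ag * ap) = ap * (a * star ag * ap) := calc
    _ = ap * (a * ag * a) * (star ag * ap) := by simp only [mul_assoc]
    _ = ap * (a * star ag * ap) := by rw [hg.mul_inv_mul]; simp only [mul_assoc]
  have hR : ap * a * ag * (ap * a * a) = ap * a := calc
    _ = ap * (a * ag) * (ap * a * a) := by simp only [mul_assoc]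
    _ = ap * ag * (a * ap * a) * a := by rw [hg.commute.eq]; simp only [mul_assoc]
    _ = ap * (ag * a * a) := by rw [hp.mul_inv_mul]; simp only [mul_assoc]
    _ = ap * a := by rw [hg.inv_mul_mul_self]
  unfold LeftEquiv
  rw [hL, hR]
  refine ⟨fun h => ?_, fun h => by rw [h]⟩
  calc a * star ag * ap = a * ap * a * star ag * ap := by rw [hp.mul_inv_mul]
    _ = a * (ap * (a * star ag * ap)) := by simp only [mul_assoc]
    _ = a := by rw [h, ← mul_assoc, hp.mul_inv_mul]

theorem star_eq_and_eq_iff_mul_star_mul_eq (hp : IsMoorePenroseInverse a ap)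
    (hg : IsGroupInverse a ag) : (star a = ap ∧ ap = ag) ↔ a * star ag * ap = a := by
  refine ⟨?_, fun h => ?_⟩
  · rintro ⟨rfl, rfl⟩
    rw [star_star]
    exact hg.mul_self_mul_inv
  · have hga : ag * a = a * ap :=
      hg.inv_mul_eq_of_mul_self_mul_eq (hp.mul_self_mul_eq_of_mul_mul_eq h)
    obtain rfl : ap = ag := hp.unique (hg.isMoorePenroseInverse_of_inv_mul_eq hp hga)
    exact ⟨hp.star_eq_of_mul_star_mul_eq hg.commute h, rfl⟩

end

theorem stmt_18 (R : Type*) [Ring R] [StarRing R] (a ap ag : R)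
    (h1 : a * ap * a = a) (h2 : ap * a * ap = ap)
    (h3 : star (a * ap) = a * ap) (h4 : star (ap * a) = ap * a)
    (g1 : a * ag * a = a) (g2 : ag * a * ag = ag) (g3 : a * ag = ag * a) :
    (star a = ap ∧ ap = ag) ↔ (ap * a * ag) * (a * star ag * ap) = (ap * a * ag) * (ap * a * a) := by
  have hp : IsMoorePenroseInverse a ap := ⟨h1, h2, h3, h4⟩
  have hg : IsGroupInverse a ag := ⟨g1, g2, g3⟩
  exact (star_eq_and_eq_iff_mul_star_mul_eq hp hg).trans
    (leftEquiv_iff_mul_star_mul_eq hp hg).symm
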